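/- Suppose E is (c_i, δ_i, θ)-weakly porous for each i ∈ ℕ with a decreasing sequence δ_i → 0 and 0 < 1 − c_i ≤ K δ_i^α. Fix a parabolic rectangle R(γ₀) and let F_δ denote the collection of maximal E-free dyadic subrectangles of R(γ₀) with measure ≥ δ|M(R^θ(γ₀))|. Define C₀ = F_{δ₀} and C_i = F_{δ_i} \ F_{δ_{i−1}}. Then: (a) ⋃_{i≤k} C_i = F_{δ_k} for every k; (b) any two distinct rectangles appearing in any of the collections C_i are disjoint; (c) the total measure of the rectangles in C_i (i ≥ 1) is at most (1 − c_{i−1})|R(γ₀)| ≤ K δ_{i−1}^α |R(γ₀)|; (d) the rectangles in ⋃_i C_i cover R(γ₀) up to a Lebesgue-null set. -/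

import Mathlib

open MeasureTheory Real Filter
open scoped ENNReal Classical

noncomputable section

/-- A (truncated) parabolic rectangle in `ℝ^n × ℝ`, given by spatial center
`x`, top time `t`, side length `L` and truncation parameter `γ`; its
underlying set is `Q(x,L) × [t − L^p, t − γL^p)`. -/
structure PRect (n : ℕ) where
  x : Fin n → ℝ
  t : ℝ
  L : ℝ
  γ : ℝ

namespace PRect

variable {n : ℕ}

/-- The underlying set of a parabolic rectangle. -/
def toSet (p : ℝ) (R : PRect n) : Set ((Fin n → ℝ) × ℝ) :=
  {z | (∀ i, R.x i - R.L / 2 ≤ z.1 i ∧ z.1 i < R.x i + R.L / 2) ∧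
    R.t - R.L ^ p ≤ z.2 ∧ z.2 < R.t - R.γ * R.L ^ p}

/-- The temporal translate `R^θ = R + (0, θ·l_t(R))`. -/
def translate (p θ : ℝ) (R : PRect n) : PRect n :=
  ⟨R.x, R.t + θ * ((1 - R.γ) * R.L ^ p), R.L, R.γ⟩

/-- The number of temporal divisions in one dyadic step. -/
def childK (p : ℝ) (d : ℕ) (γ : ℝ) : ℕ :=
  if γ ≤ 1 - ((2 : ℝ) ^ ((d : ℝ) * p) + 1) / (2 : ℝ) ^ ((d : ℝ) * p + 1) then
    ⌈(2 : ℝ) ^ ((d : ℝ) * p)⌉₊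
  else
    ⌊(2 : ℝ) ^ ((d : ℝ) * p)⌋₊

/-- `P` is a first-order dyadic child of `R` (spatial edges divided into `2^d`
parts, temporal edges into `childK p d R.γ` parts). -/
def IsChild (p : ℝ) (d : ℕ) (R P : PRect n) : Prop :=
  ∃ (v : Fin n → ℕ) (j : ℕ),
    (∀ i, v i < 2 ^ d) ∧ j < childK p d R.γ ∧
    P.L = R.L / 2 ^ d ∧
    (∀ i, P.x i = R.x i - R.L / 2 + ((v i : ℝ) + 1 / 2) * (R.L / 2 ^ d)) ∧
    P.t = R.t - R.L ^ p + (j : ℝ) * ((1 - R.γ) * R.L ^ p / childK p d R.γ) + P.L ^ p ∧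
    P.γ = 1 - ((1 - R.γ) * R.L ^ p / childK p d R.γ) / P.L ^ p

/-- `P` belongs to the dyadic lattice `D(R)` of the rectangle `R`. -/
inductive IsDyadic (p : ℝ) (d : ℕ) (R : PRect n) : PRect n → Prop
  | refl : IsDyadic p d R R
  | step {Q S : PRect n} : IsDyadic p d R Q → IsChild p d Q S → IsDyadic p d R S

/-- The measure of the largest `E`-free dyadic subrectangle `M(R)` of `R`
(zero if there is none). -/
def maxHole (p : ℝ) (d : ℕ) (E : Set ((Fin n → ℝ) × ℝ)) (R : PRect n) : ℝ≥0∞ :=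
  ⨆ (P : PRect n) (_ : IsDyadic p d R P ∧ P.toSet p ∩ E = ∅), volume (P.toSet p)

end PRect

/-- `E ⊆ ℝ^{n+1}` is `(c,δ,θ)`-weakly porous: every parabolic rectangle
`R(γ₀)` with `γ₀ ∈ [0,1/2]` contains pairwise disjoint `E`-free dyadic
subrectangles, each of measure at least `δ·|M(R^θ(γ₀))|`, of total measure at
least `c·|R(γ₀)|`. -/
def WeaklyPorous (n : ℕ) (p : ℝ) (d : ℕ) (E : Set ((Fin n → ℝ) × ℝ))
    (c δ θ : ℝ) : Prop :=
  ∀ R : PRect n, 0 < R.L → 0 ≤ R.γ → R.γ ≤ 1 / 2 →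
    ∃ (N : ℕ) (P : Fin N → PRect n),
      (∀ k, PRect.IsDyadic p d R (P k)) ∧
      (∀ k, (P k).toSet p ∩ E = ∅) ∧
      (∀ k l, k ≠ l → (P k).toSet p ∩ (P l).toSet p = ∅) ∧
      (∀ k, ENNReal.ofReal δ * PRect.maxHole p d E (R.translate p θ) ≤
        volume ((P k).toSet p)) ∧
      ENNReal.ofReal c * volume (R.toSet p) ≤ ∑ k, volume ((P k).toSet p)

/-- `P` is a maximal `E`-free dyadic subrectangle of `R`: it is `E`-free and
any `E`-free dyadic subrectangle of `R` containing `P` in the lattice is `P`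
itself. -/
def MaximalFree (p : ℝ) (d : ℕ) (E : Set ((Fin n → ℝ) × ℝ)) (R P : PRect n) : Prop :=
  PRect.IsDyadic p d R P ∧ P.toSet p ∩ E = ∅ ∧
    ∀ Q : PRect n, PRect.IsDyadic p d R Q → PRect.IsDyadic p d Q P →
      Q.toSet p ∩ E = ∅ → Q = P

/-- The collection `F_δ^θ(R)` of maximal `E`-free dyadic subrectangles of `R`
with measure at least `δ·|M(R^θ)|`. -/
def Fdelta (p : ℝ) (d : ℕ) (E : Set ((Fin n → ℝ) × ℝ)) (θ δ : ℝ) (R : PRect n) :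
    Set (PRect n) :=
  {P | MaximalFree p d E R P ∧
    ENNReal.ofReal δ * PRect.maxHole p d E (R.translate p θ) ≤ volume (P.toSet p)}

section Aux

open PRect Set

variable {n : ℕ} {p : ℝ} {d : ℕ}

/-- Goodness invariant preserved by dyadic subdivision. -/
def Good (R : PRect n) : Prop := 0 < R.L ∧ R.γ < 1

lemma PRect.ext' {P Q : PRect n} (hx : P.x = Q.x) (ht : P.t = Q.t)
    (hL : P.L = Q.L) (hγ : P.γ = Q.γ) : P = Q := by
  cases P; cases Q; simp_all

lemma childK_pos (hp : 1 < p) (hd : 1 ≤ d) (γ : ℝ) : 0 < PRect.childK p d γ := by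
  have h1 : (1:ℝ) ≤ (2:ℝ) ^ ((d:ℝ) * p) := by
    rw [show (1:ℝ) = (2:ℝ) ^ (0:ℝ) by simp]
    apply Real.rpow_le_rpow_of_exponent_le one_le_two
    have : (1:ℝ) ≤ (d:ℝ) := by exact_mod_cast hd
    nlinarith
  unfold PRect.childK
  split
  · exact Nat.ceil_pos.mpr (lt_of_lt_of_le one_pos h1)
  · exact Nat.floor_pos.mpr h1

lemma toSet_eq (p : ℝ) (R : PRect n) :
    R.toSet p = (Set.univ.pi fun i => Set.Ico (R.x i - R.L/2) (R.x i + R.L/2)) ×ˢ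
      Set.Ico (R.t - R.L ^ p) (R.t - R.γ * R.L ^ p) := by
  ext z
  simp [PRect.toSet, Set.mem_pi, Set.mem_Ico, forall_and]

lemma measurableSet_toSet (p : ℝ) (R : PRect n) : MeasurableSet (R.toSet p) := by
  rw [toSet_eq]
  exact (MeasurableSet.univ_pi fun i => measurableSet_Ico).prod measurableSet_Ico

lemma volume_toSet_ne_top (p : ℝ) (R : PRect n) : volume (R.toSet p) ≠ ⊤ := by
  rw [toSet_eq, Measure.volume_eq_prod, Measure.prod_prod, volume_pi_pi]
  simp only [Real.volume_Ico]
  exact ENNReal.mul_ne_top (ENNReal.prod_ne_top fun i _ => ENNReal.ofReal_ne_top)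
    ENNReal.ofReal_ne_top

lemma child_props (hp : 1 < p) (hd : 1 ≤ d) {R P : PRect n}
    (hR : Good R) (h : PRect.IsChild p d R P) :
    Good P ∧ P.L = R.L / 2 ^ d ∧ P.toSet p ⊆ R.toSet p := by
  obtain ⟨v, j, hv, hj, hL, hx, ht, hγ⟩ := h
  have h2d : (0:ℝ) < 2 ^ d := by positivity
  have hPL : 0 < P.L := by rw [hL]; exact div_pos hR.1 h2d
  have hKpos : 0 < PRect.childK p d R.γ := childK_pos hp hd R.γ
  have hKr : (0:ℝ) < (PRect.childK p d R.γ : ℝ) := by exact_mod_cast hKpos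
  have hRLp : (0:ℝ) < R.L ^ p := Real.rpow_pos_of_pos hR.1 p
  have hPLp : (0:ℝ) < P.L ^ p := Real.rpow_pos_of_pos hPL p
  set K : ℝ := (PRect.childK p d R.γ : ℝ) with hKdef
  set len : ℝ := (1 - R.γ) * R.L ^ p / K with hlen
  have hγ1 : (0:ℝ) < 1 - R.γ := by linarith [hR.2]
  have hlenpos : 0 < len := div_pos (mul_pos hγ1 hRLp) hKr
  have hPγ : P.γ < 1 := by
    rw [hγ]
    have : 0 < len / P.L ^ p := div_pos hlenpos hPLp
    linarith
  refine ⟨⟨hPL, hPγ⟩, hL, ?_⟩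
  -- key identities
  have hfrac : (1 - P.γ) * P.L ^ p = len := by
    rw [hγ]; field_simp; ring
  have hKlen : K * len = (1 - R.γ) * R.L ^ p := by
    rw [hlen]; field_simp
  intro z hz
  obtain ⟨hsp, htm1, htm2⟩ := hz
  constructor
  · intro i
    obtain ⟨h1, h2⟩ := hsp i
    have hxi := hx i
    have hvi : ((v i : ℝ) + 1) ≤ (2:ℝ) ^ d := by
      have := hv i
      have : ((v i : ℝ)) + 1 ≤ ((2^d : ℕ) : ℝ) := by exact_mod_cast this
      simpa using this
    have hvnn : (0:ℝ) ≤ (v i : ℝ) := Nat.cast_nonneg _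
    have hw : R.L / 2 ^ d * 2 ^ d = R.L := by field_simp
    constructor
    · have : R.x i - R.L / 2 ≤ P.x i - P.L / 2 := by
        rw [hxi, hL]; nlinarith [div_pos hR.1 h2d]
      linarith
    · have : P.x i + P.L / 2 ≤ R.x i + R.L / 2 := by
        rw [hxi, hL]
        have hww : (0:ℝ) < R.L / 2 ^ d := div_pos hR.1 h2d
        have h3 : ((v i : ℝ) + 1) * (R.L / 2 ^ d) ≤ (2:ℝ) ^ d * (R.L / 2 ^ d) :=
          mul_le_mul_of_nonneg_right hvi hww.le
        have h4 : (2:ℝ) ^ d * (R.L / 2 ^ d) = R.L := by field_simp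
        nlinarith
      linarith
  · have hjnn : (0:ℝ) ≤ (j : ℝ) := Nat.cast_nonneg _
    have hj1 : ((j : ℝ) + 1) ≤ K := by
      have h' : (j + 1 : ℕ) ≤ PRect.childK p d R.γ := hj
      rw [hKdef]
      exact_mod_cast h'
    constructor
    · have : R.t - R.L ^ p ≤ P.t - P.L ^ p := by
        rw [ht]; nlinarith
      linarith
    · have hup : P.t - P.γ * P.L ^ p = R.t - R.L ^ p + ((j:ℝ) + 1) * len := by
        have : P.t - P.γ * P.L ^ p = (P.t - P.L ^ p) + (1 - P.γ) * P.L ^ p := by ring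
        rw [this, hfrac, ht]; ring
      have : ((j:ℝ) + 1) * len ≤ K * len := mul_le_mul_of_nonneg_right hj1 hlenpos.le
      rw [hup] at htm2
      linarith [hKlen]

lemma nat_mem_eq {w c a : ℝ} (hw : 0 < w) {m m' : ℕ}
    (h1 : a + (m:ℝ) * w ≤ c) (h2 : c < a + ((m:ℝ)+1) * w)
    (h3 : a + (m':ℝ) * w ≤ c) (h4 : c < a + ((m':ℝ)+1) * w) : m = m' := by
  rcases lt_trichotomy m m' with h|h|h
  · exfalso
    have hmm : (m:ℝ) + 1 ≤ (m':ℝ) := by exact_mod_cast h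
    nlinarith
  · exact h
  · exfalso
    have hmm : (m':ℝ) + 1 ≤ (m:ℝ) := by exact_mod_cast h
    nlinarith

set_option maxHeartbeats 2000000 in
lemma child_eq_of_mem (hp : 1 < p) (hd : 1 ≤ d) {R P Q : PRect n}
    (hR : Good R) (hP : PRect.IsChild p d R P) (hQ : PRect.IsChild p d R Q)
    {z : (Fin n → ℝ) × ℝ} (hzP : z ∈ P.toSet p) (hzQ : z ∈ Q.toSet p) : P = Q := by
  obtain ⟨v, j, hv, hj, hL, hx, ht, hγ⟩ := hP
  obtain ⟨v', j', hv', hj', hL', hx', ht', hγ'⟩ := hQ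
  have h2d : (0:ℝ) < 2 ^ d := by positivity
  have hw : (0:ℝ) < R.L / 2 ^ d := div_pos hR.1 h2d
  have hKpos : 0 < PRect.childK p d R.γ := childK_pos hp hd R.γ
  have hKr : (0:ℝ) < (PRect.childK p d R.γ : ℝ) := by exact_mod_cast hKpos
  have hRLp : (0:ℝ) < R.L ^ p := Real.rpow_pos_of_pos hR.1 p
  have hPL : 0 < P.L := by rw [hL]; exact hw
  have hQL : 0 < Q.L := by rw [hL']; exact hw
  have hPLp : (0:ℝ) < P.L ^ p := Real.rpow_pos_of_pos hPL p
  have hQLp : (0:ℝ) < Q.L ^ p := Real.rpow_pos_of_pos hQL p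
  have hγ1 : (0:ℝ) < 1 - R.γ := by linarith [hR.2]
  set len : ℝ := (1 - R.γ) * R.L ^ p / (PRect.childK p d R.γ : ℝ) with hlen
  have hlenpos : 0 < len := div_pos (mul_pos hγ1 hRLp) hKr
  have hfracP : (1 - P.γ) * P.L ^ p = len := by rw [hγ]; field_simp; ring
  have hfracQ : (1 - Q.γ) * Q.L ^ p = len := by rw [hγ']; field_simp; ring
  obtain ⟨hsP, htP1, htP2⟩ := hzP
  obtain ⟨hsQ, htQ1, htQ2⟩ := hzQ
  have hvv : v = v' := by
    funext i
    obtain ⟨a1, a2⟩ := hsP i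
    obtain ⟨b1, b2⟩ := hsQ i
    have e1 := hx i; have e2 := hx' i
    refine nat_mem_eq hw (a := R.x i - R.L/2) (c := z.1 i) ?_ ?_ ?_ ?_
    · rw [e1, hL] at a1; linarith
    · rw [e1, hL] at a2; linarith
    · rw [e2, hL'] at b1; linarith
    · rw [e2, hL'] at b2; linarith
  have hjj : j = j' := by
    have uP : P.t - P.γ * P.L ^ p = R.t - R.L ^ p + ((j:ℝ)+1) * len := by
      have h0 : P.t - P.γ * P.L ^ p = (P.t - P.L ^ p) + (1 - P.γ) * P.L ^ p := by ring
      rw [h0, hfracP, ht]; ring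
    have uQ : Q.t - Q.γ * Q.L ^ p = R.t - R.L ^ p + ((j':ℝ)+1) * len := by
      have h0 : Q.t - Q.γ * Q.L ^ p = (Q.t - Q.L ^ p) + (1 - Q.γ) * Q.L ^ p := by ring
      rw [h0, hfracQ, ht']; ring
    refine nat_mem_eq hlenpos (a := R.t - R.L ^ p) (c := z.2) ?_ ?_ ?_ ?_
    · rw [ht] at htP1; linarith
    · rw [uP] at htP2; linarith
    · rw [ht'] at htQ1; linarith
    · rw [uQ] at htQ2; linarith
  subst hvv; subst hjj
  have hLL : P.L = Q.L := by rw [hL, hL']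
  refine PRect.ext' ?_ ?_ hLL ?_
  · funext i; rw [hx i, hx' i]
  · rw [ht, ht', hLL]
  · rw [hγ, hγ', hLL]

lemma dyadic_trans {R Q P : PRect n} (h1 : PRect.IsDyadic p d R Q)
    (h2 : PRect.IsDyadic p d Q P) : PRect.IsDyadic p d R P := by
  induction h2 with
  | refl => exact h1
  | step hQ hch ih => exact PRect.IsDyadic.step ih hch

lemma dyadic_props (hp : 1 < p) (hd : 1 ≤ d) {R P : PRect n}
    (hR : Good R) (h : PRect.IsDyadic p d R P) :
    Good P ∧ P.L ≤ R.L ∧ P.toSet p ⊆ R.toSet p := by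
  induction h with
  | refl => exact ⟨hR, le_refl _, subset_rfl⟩
  | @step Q S hQ hch ih =>
    obtain ⟨hgood, hLle, hsub⟩ := ih
    obtain ⟨hg2, hL2, hsub2⟩ := child_props hp hd hgood hch
    refine ⟨hg2, ?_, hsub2.trans hsub⟩
    rw [hL2]
    have h1 : (1:ℝ) ≤ 2 ^ d := one_le_pow₀ one_le_two
    exact (div_le_self hgood.1.le h1).trans hLle

lemma gen_exists (hp : 1 < p) (hd : 1 ≤ d) {R P : PRect n}
    (hR : Good R) (h : PRect.IsDyadic p d R P) :
    ∃ g : ℕ, R.L = P.L * ((2:ℝ) ^ d) ^ g := by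
  induction h with
  | refl => exact ⟨0, by simp⟩
  | @step Q S hQ hch ih =>
    obtain ⟨g, hg⟩ := ih
    have hQg := (dyadic_props hp hd hR hQ).1
    have hL := (child_props hp hd hQg hch).2.1
    refine ⟨g + 1, ?_⟩
    have h2d : (2:ℝ) ^ d ≠ 0 := by positivity
    have : Q.L = S.L * 2 ^ d := by rw [hL]; field_simp
    rw [hg, this, pow_succ]; ring

lemma dyadic_eq_or_lt (hp : 1 < p) (hd : 1 ≤ d) {R P : PRect n}
    (hR : Good R) (h : PRect.IsDyadic p d R P) :
    P = R ∨ P.L < R.L := by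
  induction h with
  | refl => exact Or.inl rfl
  | @step Q S hQ hch ih =>
    right
    have hQg := (dyadic_props hp hd hR hQ).1
    have hL := (child_props hp hd hQg hch).2.1
    have h2d : (1:ℝ) < 2 ^ d := one_lt_pow₀ one_lt_two (by omega)
    have hlt : S.L < Q.L := by rw [hL]; exact div_lt_self hQg.1 h2d
    rcases ih with rfl | h'
    · exact hlt
    · exact hlt.trans h'

lemma dyadic_cases {R P : PRect n} (h : PRect.IsDyadic p d R P) :
    P = R ∨ ∃ c, PRect.IsChild p d R c ∧ PRect.IsDyadic p d c P := by
  induction h with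
  | refl => exact Or.inl rfl
  | @step Q S hQ hch ih =>
    rcases ih with rfl | ⟨c, hc, hcQ⟩
    · exact Or.inr ⟨S, hch, PRect.IsDyadic.refl⟩
    · exact Or.inr ⟨c, hc, PRect.IsDyadic.step hcQ hch⟩

lemma nesting_aux (hp : 1 < p) (hd : 1 ≤ d) :
    ∀ g : ℕ, ∀ R P Q : PRect n, Good R →
    PRect.IsDyadic p d R P → PRect.IsDyadic p d R Q →
    R.L ≤ P.L * ((2:ℝ) ^ d) ^ g →
    (P.toSet p ∩ Q.toSet p).Nonempty →
    PRect.IsDyadic p d P Q ∨ PRect.IsDyadic p d Q P := by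
  intro g
  induction g with
  | zero =>
    intro R P Q hR hP hQ hg hne
    rcases dyadic_cases hP with rfl | ⟨c, hc, hcP⟩
    · exact Or.inl hQ
    rcases dyadic_cases hQ with rfl | ⟨c', hc', hcQ⟩
    · exact Or.inr hP
    exfalso
    have hcg := (child_props hp hd hR hc).1
    have h1 : P.L ≤ c.L := (dyadic_props hp hd hcg hcP).2.1
    have h2 : c.L = R.L / 2 ^ d := (child_props hp hd hR hc).2.1
    have h3 : (1:ℝ) < 2 ^ d := one_lt_pow₀ one_lt_two (by omega)
    simp only [pow_zero, mul_one] at hg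
    have : c.L < R.L := by rw [h2]; exact div_lt_self hR.1 h3
    linarith
  | succ g ih =>
    intro R P Q hR hP hQ hg hne
    rcases dyadic_cases hP with rfl | ⟨c, hc, hcP⟩
    · exact Or.inl hQ
    rcases dyadic_cases hQ with rfl | ⟨c', hc', hcQ⟩
    · exact Or.inr hP
    obtain ⟨z, hzP, hzQ⟩ := hne
    have hcg := (child_props hp hd hR hc).1
    have hcg' := (child_props hp hd hR hc').1
    have hzc : z ∈ c.toSet p := (dyadic_props hp hd hcg hcP).2.2 hzP
    have hzc' : z ∈ c'.toSet p := (dyadic_props hp hd hcg' hcQ).2.2 hzQ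
    have hcc : c = c' := child_eq_of_mem hp hd hR hc hc' hzc hzc'
    subst hcc
    refine ih c P Q hcg hcP hcQ ?_ ⟨z, hzP, hzQ⟩
    have h2 : c.L = R.L / 2 ^ d := (child_props hp hd hR hc).2.1
    have h2d : (0:ℝ) < 2 ^ d := by positivity
    have hgoal : R.L ≤ P.L * ((2:ℝ) ^ d) ^ g * 2 ^ d := by
      rw [mul_assoc, ← pow_succ]; exact hg
    rw [h2, div_le_iff₀ h2d]
    exact hgoal

lemma nesting (hp : 1 < p) (hd : 1 ≤ d) {R P Q : PRect n} (hR : Good R)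
    (hP : PRect.IsDyadic p d R P) (hQ : PRect.IsDyadic p d R Q)
    (hne : (P.toSet p ∩ Q.toSet p).Nonempty) :
    PRect.IsDyadic p d P Q ∨ PRect.IsDyadic p d Q P := by
  obtain ⟨g, hg⟩ := gen_exists hp hd hR hP
  exact nesting_aux hp hd g R P Q hR hP hQ (le_of_eq hg) hne

lemma exists_maximal (hp : 1 < p) (hd : 1 ≤ d) {E : Set ((Fin n → ℝ) × ℝ)}
    {R P : PRect n} (hR : Good R)
    (hP : PRect.IsDyadic p d R P) (hfree : P.toSet p ∩ E = ∅) :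
    ∃ Q, MaximalFree p d E R Q ∧ PRect.IsDyadic p d Q P := by
  set S : Set ℕ := {g | ∃ Q : PRect n, PRect.IsDyadic p d R Q ∧ PRect.IsDyadic p d Q P ∧
    Q.toSet p ∩ E = ∅ ∧ R.L = Q.L * ((2:ℝ) ^ d) ^ g} with hS
  have hSne : S.Nonempty := by
    obtain ⟨g, hg⟩ := gen_exists hp hd hR hP
    exact ⟨g, P, hP, PRect.IsDyadic.refl, hfree, hg⟩
  obtain ⟨Q, hQdy, hQP, hQfree, hQg⟩ := Nat.sInf_mem hSne
  refine ⟨Q, ⟨hQdy, hQfree, ?_⟩, hQP⟩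
  intro Q' hQ'dy hQ'Q hQ'free
  have hQ'P : PRect.IsDyadic p d Q' P := dyadic_trans hQ'Q hQP
  obtain ⟨g', hg'⟩ := gen_exists hp hd hR hQ'dy
  have hle : sInf S ≤ g' := Nat.sInf_le ⟨Q', hQ'dy, hQ'P, hQ'free, hg'⟩
  have hQ'good := (dyadic_props hp hd hR hQ'dy).1
  have hQgood := (dyadic_props hp hd hR hQdy).1
  rcases dyadic_eq_or_lt hp hd hQ'good hQ'Q with h | h
  · exact h.symm
  · exfalso
    have h2d : (1:ℝ) ≤ 2 ^ d := one_le_pow₀ one_le_two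
    have hpow : ((2:ℝ) ^ d) ^ (sInf S) ≤ ((2:ℝ) ^ d) ^ g' :=
      pow_le_pow_right₀ h2d hle
    have hApos : (0:ℝ) < ((2:ℝ) ^ d) ^ g' := by positivity
    have e : Q'.L * ((2:ℝ) ^ d) ^ g' = Q.L * ((2:ℝ) ^ d) ^ (sInf S) := by
      rw [← hg', hQg]
    have h1 : Q.L * ((2:ℝ) ^ d) ^ (sInf S) ≤ Q.L * ((2:ℝ) ^ d) ^ g' :=
      mul_le_mul_of_nonneg_left hpow hQgood.1.le
    have h2 : Q'.L ≤ Q.L := le_of_mul_le_mul_right (e.le.trans h1) hApos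
    linarith

lemma maximalFree_disjoint (hp : 1 < p) (hd : 1 ≤ d) {E : Set ((Fin n → ℝ) × ℝ)}
    {R P Q : PRect n} (hR : Good R)
    (hP : MaximalFree p d E R P) (hQ : MaximalFree p d E R Q) (hne : P ≠ Q) :
    P.toSet p ∩ Q.toSet p = ∅ := by
  by_contra h
  have hne' : (P.toSet p ∩ Q.toSet p).Nonempty := Set.nonempty_iff_ne_empty.mpr h
  rcases nesting hp hd hR hP.1 hQ.1 hne' with h' | h'
  · exact hne (hQ.2.2 P hP.1 h' hP.2.1)
  · exact hne (hP.2.2 Q hQ.1 h' hQ.2.1).symm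

lemma Fdelta_mono {E : Set ((Fin n → ℝ) × ℝ)} {θ : ℝ} {R : PRect n} {δ δ' : ℝ}
    (h : δ' ≤ δ) : Fdelta p d E θ δ R ⊆ Fdelta p d E θ δ' R := by
  rintro P ⟨hm, hv⟩
  exact ⟨hm, le_trans (mul_le_mul_left (ENNReal.ofReal_le_ofReal h) _) hv⟩

end Aux

/-- Structure of the layered collections `C₀ = F_{δ₀}`, `C_i = F_{δ_i} \ F_{δ_{i−1}}`
for a weakly porous set with admissibility parameters `δ_i ↓ 0`,
`1 − c_i ≤ K δ_i^α`: (a) `⋃_{i ≤ k} C_i = F_{δ_k}`; (b) distinct rectangles in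
the collections are pairwise disjoint; (c) the rectangles of `C_i` (`i ≥ 1`)
have total measure at most `(1 − c_{i−1})|R| ≤ K δ_{i−1}^α |R|`; (d) the
rectangles of `⋃_i C_i` cover `R` up to a null set. -/
theorem layered_collections_structure
    (n : ℕ) (p : ℝ) (hp : 1 < p) (d : ℕ) (hd : 1 ≤ d)
    (E : Set ((Fin n → ℝ) × ℝ)) (hEne : E.Nonempty) (hEcl : IsClosed E)
    (θ α K : ℝ) (hα : 0 < α) (hK : 0 < K)
    (cs δs : ℕ → ℝ)
    (hcs : ∀ i, 0 < cs i ∧ cs i < 1) (hδs : ∀ i, 0 < δs i ∧ δs i < 1)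
    (hdec : ∀ i, δs (i + 1) ≤ δs i)
    (hlim : Filter.Tendsto δs Filter.atTop (nhds 0))
    (hci : ∀ i, 0 < 1 - cs i ∧ 1 - cs i ≤ K * δs i ^ α)
    (hwp : ∀ i, WeaklyPorous n p d E (cs i) (δs i) θ)
    (R : PRect n) (hRL : 0 < R.L) (hRγ0 : 0 ≤ R.γ) (hRγ : R.γ ≤ 1 / 2)
    (Ci : ℕ → Set (PRect n))
    (hC0 : Ci 0 = Fdelta p d E θ (δs 0) R)
    (hCi : ∀ i, Ci (i + 1) = Fdelta p d E θ (δs (i + 1)) R \ Fdelta p d E θ (δs i) R) :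
    (∀ k : ℕ, (⋃ i, ⋃ (_ : i ≤ k), Ci i) = Fdelta p d E θ (δs k) R) ∧
    (∀ i j : ℕ, ∀ P ∈ Ci i, ∀ Q ∈ Ci j, P ≠ Q → P.toSet p ∩ Q.toSet p = ∅) ∧
    (∀ i : ℕ,
      volume (⋃ P ∈ Ci (i + 1), P.toSet p) ≤
        ENNReal.ofReal (1 - cs i) * volume (R.toSet p) ∧
      ENNReal.ofReal (1 - cs i) * volume (R.toSet p) ≤
        ENNReal.ofReal (K * δs i ^ α) * volume (R.toSet p)) ∧
    volume (R.toSet p \ ⋃ i, ⋃ P ∈ Ci i, P.toSet p) = 0 := by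
  classical
  have hGoodR : Good R := ⟨hRL, lt_of_le_of_lt hRγ (by norm_num)⟩
  have hanti : Antitone δs := antitone_nat_of_succ_le hdec
  have hFmono : ∀ i j : ℕ, i ≤ j →
      Fdelta p d E θ (δs i) R ⊆ Fdelta p d E θ (δs j) R :=
    fun i j h => Fdelta_mono (hanti h)
  have hvolR : volume (R.toSet p) ≠ ⊤ := volume_toSet_ne_top p R
  -- (a)
  have ha : ∀ k : ℕ, (⋃ i, ⋃ (_ : i ≤ k), Ci i) = Fdelta p d E θ (δs k) R := by
    intro k
    induction k with
    | zero =>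
      ext P; simp [Nat.le_zero, hC0]
    | succ k ih =>
      ext P
      simp only [Set.mem_iUnion]
      constructor
      · rintro ⟨i, hi, hPi⟩
        rcases Nat.lt_succ_iff_lt_or_eq.mp (Nat.lt_succ_of_le hi) with h | rfl
        · have hP : P ∈ Fdelta p d E θ (δs k) R := by
            rw [← ih]
            exact Set.mem_iUnion.mpr ⟨i, Set.mem_iUnion.mpr ⟨Nat.lt_succ_iff.mp h, hPi⟩⟩
          exact hFmono k (k+1) (Nat.le_succ k) hP
        · rw [hCi k] at hPi
          exact hPi.1
      · intro hP
        by_cases h : P ∈ Fdelta p d E θ (δs k) R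
        · rw [← ih] at h
          obtain ⟨i, hi⟩ := Set.mem_iUnion.mp h
          obtain ⟨hik, hPi⟩ := Set.mem_iUnion.mp hi
          exact ⟨i, Nat.le_succ_of_le hik, hPi⟩
        · exact ⟨k+1, le_refl _, by rw [hCi k]; exact ⟨hP, h⟩⟩
  -- each Ci is contained in the corresponding Fdelta
  have hCiF : ∀ i : ℕ, Ci i ⊆ Fdelta p d E θ (δs i) R := by
    intro i
    cases i with
    | zero => rw [hC0]
    | succ i => rw [hCi i]; exact Set.diff_subset
  -- (b)
  have hb : ∀ i j : ℕ, ∀ P ∈ Ci i, ∀ Q ∈ Ci j, P ≠ Q →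
      P.toSet p ∩ Q.toSet p = ∅ := by
    intro i j P hP Q hQ hne
    exact maximalFree_disjoint hp hd hGoodR ((hCiF i hP)).1 ((hCiF j hQ)).1 hne
  -- the quantitative core: big measurable chunks inside ⋃ F_{δ_i}
  have key : ∀ i : ℕ, ∃ B : Set ((Fin n → ℝ) × ℝ), MeasurableSet B ∧
      B ⊆ R.toSet p ∧
      (∀ z ∈ B, ∃ Q ∈ Fdelta p d E θ (δs i) R, z ∈ Q.toSet p) ∧
      ENNReal.ofReal (cs i) * volume (R.toSet p) ≤ volume B := by
    intro i
    obtain ⟨N, Pf, hdy, hfree, hdisj, hthr, hsum⟩ := hwp i R hRL hRγ0 hRγ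
    have hext : ∀ k, ∃ Q, MaximalFree p d E R Q ∧ PRect.IsDyadic p d Q (Pf k) :=
      fun k => exists_maximal hp hd hGoodR (hdy k) (hfree k)
    choose Qf hQf1 hQf2 using hext
    have hQgood : ∀ k, Good (Qf k) :=
      fun k => (dyadic_props hp hd hGoodR (hQf1 k).1).1
    have hPsubQ : ∀ k, (Pf k).toSet p ⊆ (Qf k).toSet p :=
      fun k => (dyadic_props hp hd (hQgood k) (hQf2 k)).2.2
    have hQF : ∀ k, Qf k ∈ Fdelta p d E θ (δs i) R := by
      intro k
      refine ⟨hQf1 k, le_trans (hthr k) (measure_mono (hPsubQ k))⟩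
    refine ⟨⋃ k, (Qf k).toSet p, ?_, ?_, ?_, ?_⟩
    · exact MeasurableSet.iUnion fun k => measurableSet_toSet p (Qf k)
    · exact Set.iUnion_subset fun k =>
        (dyadic_props hp hd hGoodR (hQf1 k).1).2.2
    · intro z hz
      obtain ⟨k, hk⟩ := Set.mem_iUnion.mp hz
      exact ⟨Qf k, hQF k, hk⟩
    · calc ENNReal.ofReal (cs i) * volume (R.toSet p)
          ≤ ∑ k, volume ((Pf k).toSet p) := hsum
        _ = volume (⋃ k, (Pf k).toSet p) := by
            rw [measure_iUnion ?_ fun k => measurableSet_toSet p (Pf k)]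
            · exact (tsum_fintype _).symm
            · intro k l hkl
              exact Set.disjoint_iff_inter_eq_empty.mpr (hdisj k l hkl)
        _ ≤ volume (⋃ k, (Qf k).toSet p) :=
            measure_mono (Set.iUnion_mono fun k => hPsubQ k)
  choose B hBmeas hBsub hBcov hBvol using key
  -- the upper bound for the complement of B i inside R
  have hRB : ∀ i : ℕ, volume (R.toSet p \ B i) ≤
      ENNReal.ofReal (1 - cs i) * volume (R.toSet p) := by
    intro i
    have hBfin : volume (B i) ≠ ⊤ :=
      fun h => hvolR (top_le_iff.mp (h ▸ measure_mono (hBsub i)))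
    rw [measure_diff (hBsub i) (hBmeas i).nullMeasurableSet hBfin]
    have e1 : ENNReal.ofReal (1 - cs i) = 1 - ENNReal.ofReal (cs i) := by
      rw [← ENNReal.ofReal_one, ← ENNReal.ofReal_sub _ (hcs i).1.le]
    have e2 : (1 - ENNReal.ofReal (cs i)) * volume (R.toSet p) =
        volume (R.toSet p) - ENNReal.ofReal (cs i) * volume (R.toSet p) := by
      rw [ENNReal.sub_mul (fun _ _ => hvolR), one_mul]
    rw [e1, e2]
    exact tsub_le_tsub_left (hBvol i) _
  -- disjointness of C_{i+1} rectangles from B i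
  have hCB : ∀ i : ℕ, (⋃ P ∈ Ci (i+1), PRect.toSet p P) ⊆ R.toSet p \ B i := by
    intro i z hz
    simp only [Set.mem_iUnion] at hz
    obtain ⟨P, hP, hzP⟩ := hz
    have hPF := hCiF (i+1) hP
    constructor
    · exact (dyadic_props hp hd hGoodR hPF.1.1).2.2 hzP
    · intro hzB
      obtain ⟨Q, hQF, hzQ⟩ := hBcov i z hzB
      have hne : P ≠ Q := by
        rintro rfl
        rw [hCi i] at hP
        exact hP.2 hQF
      have := maximalFree_disjoint hp hd hGoodR hPF.1 hQF.1 hne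
      exact Set.eq_empty_iff_forall_notMem.mp this z ⟨hzP, hzQ⟩
  -- (c)
  have hc : ∀ i : ℕ,
      volume (⋃ P ∈ Ci (i + 1), PRect.toSet p P) ≤
        ENNReal.ofReal (1 - cs i) * volume (R.toSet p) ∧
      ENNReal.ofReal (1 - cs i) * volume (R.toSet p) ≤
        ENNReal.ofReal (K * δs i ^ α) * volume (R.toSet p) := by
    intro i
    constructor
    · exact le_trans (measure_mono (hCB i)) (hRB i)
    · exact mul_le_mul_left (ENNReal.ofReal_le_ofReal (hci i).2) _
  refine ⟨ha, hb, hc, ?_⟩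
  -- (d)
  have hcover : ∀ i : ℕ,
      R.toSet p \ (⋃ i, ⋃ P ∈ Ci i, PRect.toSet p P) ⊆ R.toSet p \ B i := by
    intro i z hz
    refine ⟨hz.1, fun hzB => hz.2 ?_⟩
    obtain ⟨Q, hQF, hzQ⟩ := hBcov i z hzB
    rw [← ha i] at hQF
    simp only [Set.mem_iUnion] at hQF ⊢
    obtain ⟨j, hj, hQj⟩ := hQF
    exact ⟨j, Q, hQj, hzQ⟩
  have hbound : ∀ i : ℕ,
      volume (R.toSet p \ ⋃ i, ⋃ P ∈ Ci i, PRect.toSet p P) ≤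
        ENNReal.ofReal (K * δs i ^ α) * volume (R.toSet p) :=
    fun i => le_trans (le_trans (measure_mono (hcover i)) (hRB i)) (hc i).2
  have hlim2 : Filter.Tendsto (fun i => ENNReal.ofReal (K * δs i ^ α) *
      volume (R.toSet p)) Filter.atTop (nhds 0) := by
    have h1 : Filter.Tendsto (fun i => δs i ^ α) Filter.atTop (nhds 0) := by
      have hc0 : ContinuousAt (fun x : ℝ => x ^ α) 0 :=
        Real.continuousAt_rpow_const 0 α (Or.inr hα.le)
      have := hc0.tendsto.comp hlim
      rwa [Real.zero_rpow hα.ne'] at this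
    have h2 : Filter.Tendsto (fun i => K * δs i ^ α) Filter.atTop (nhds 0) := by
      have := h1.const_mul K
      rwa [mul_zero] at this
    have h3 : Filter.Tendsto (fun i => ENNReal.ofReal (K * δs i ^ α))
        Filter.atTop (nhds 0) := by
      have := (ENNReal.continuous_ofReal.tendsto 0).comp h2
      rwa [ENNReal.ofReal_zero] at this
    have h4 := ENNReal.Tendsto.mul_const h3 (Or.inr hvolR)
    rwa [zero_mul] at h4
  have : volume (R.toSet p \ ⋃ i, ⋃ P ∈ Ci i, PRect.toSet p P) ≤ 0 :=
    ge_of_tendsto' hlim2 hbound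
  exact le_antisymm this zero_le


end
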